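/- Let V ⊆ ℂ^{n+2} be the complexification of a B-nondegenerate real subspace, α ∈ ℂ× with |α| ≠ 1, and L a null line with L and ρ_V L complementary. Set V′ := p^V_{α,L}(0)V and L′ := p^V_{α,L}(α*)L̄, assume L′ and ρ_{V′}L′ are complementary, and define r(λ) := p^{V′}_{α*,L′}(λ) ∘ p^V_{α,L}(λ) for λ ∈ (ℂ∪{∞}) ∖ {±α, ±α*}. Then: (i) the automorphism r(−λ) ∘ ρ_V ∘ r(λ)^{-1} is the same for all λ in the domain; (ii) r(0)^{-1} ∘ r(∞) maps V to itself and det((r(0)^{-1} ∘ r(∞))|_V) = 1. -/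

import Mathlib

noncomputable section

open Module

/-- The complexification `ℂ^{n+2}` of `ℝ^{n+1,1}`. -/
abbrev Cn (n : ℕ) := Fin (n + 2) → ℂ

/-- The complex-bilinear extension `B` of the signature `(n+1,1)` inner product on
`ℝ^{n+1,1}`. -/
def Bf (n : ℕ) (v w : Cn n) : ℂ :=
  ∑ i : Fin (n + 2), (if (i : ℕ) < n + 1 then 1 else -1) * v i * w i

lemma Bf_add_left {n : ℕ} (v v' w : Cn n) :
    Bf n (v + v') w = Bf n v w + Bf n v' w := by
  simp only [Bf, Pi.add_apply, ← Finset.sum_add_distrib]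
  exact Finset.sum_congr rfl fun i _ => by ring

lemma Bf_smul_left {n : ℕ} (c : ℂ) (v w : Cn n) :
    Bf n (c • v) w = c * Bf n v w := by
  simp only [Bf, Pi.smul_apply, smul_eq_mul, Finset.mul_sum]
  exact Finset.sum_congr rfl fun i _ => by ring

lemma Bf_zero_left {n : ℕ} (w : Cn n) : Bf n 0 w = 0 := by
  simp [Bf]

/-- Complex conjugation on `ℂ^{n+2}`, as a `conj`-semilinear automorphism;
its fixed point set is `ℝ^{n+1,1}`. -/
def conjSL (n : ℕ) : Cn n →ₛₗ[starRingEnd ℂ] Cn n where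
  toFun v := fun i => starRingEnd ℂ (v i)
  map_add' a b := by funext i; simp
  map_smul' c v := by funext i; simp

instance : RingHomSurjective (starRingEnd ℂ) :=
  ⟨fun x => ⟨starRingEnd ℂ x, by simp⟩⟩

/-- The conjugate `Ū` of a complex subspace `U` of `ℂ^{n+2}`. -/
def conjSub {n : ℕ} (U : Submodule ℂ (Cn n)) : Submodule ℂ (Cn n) :=
  U.map (conjSL n)

/-- The real points `ℝ^{n+1,1}` inside `ℂ^{n+2}`, as a real subspace. -/
def realSub (n : ℕ) : Submodule ℝ (Cn n) where
  carrier := {v | ∀ i, starRingEnd ℂ (v i) = v i}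
  add_mem' := by
    intro a b ha hb i
    simp only [Pi.add_apply, map_add, ha i, hb i]
  zero_mem' := by intro i; simp
  smul_mem' := by
    intro c v hv i
    simp only [Pi.smul_apply, Complex.real_smul, map_mul, Complex.conj_ofReal, hv i]

/-- The real points `W ∩ ℝ^{n+1,1}` of a complex subspace `W ⊆ ℂ^{n+2}`. -/
def realPoints {n : ℕ} (W : Submodule ℂ (Cn n)) : Submodule ℝ (Cn n) :=
  (W.restrictScalars ℝ) ⊓ realSub n

/-- The Gram matrix `diag(1,1,1,-1)`. -/
def gram31 (i j : Fin 4) : ℂ :=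
  if i = j then (if (i : ℕ) < 3 then 1 else -1) else 0

/-- A real subspace `P` of `ℂ^{n+2}` has signature `(3,1)` if it admits a
basis whose Gram matrix with respect to `B` is `diag(1,1,1,-1)`. -/
def hasSig31 (n : ℕ) (P : Submodule ℝ (Cn n)) : Prop :=
  ∃ b : Fin 4 → Cn n, (∀ i, b i ∈ P) ∧
    Submodule.span ℝ (Set.range b) = P ∧
    ∀ i j, Bf n (b i) (b j) = gram31 i j

/-- The orthogonal complement of a subspace with respect to `B`. -/
def perp (n : ℕ) (V : Submodule ℂ (Cn n)) : Submodule ℂ (Cn n) where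
  carrier := {v | ∀ w ∈ V, Bf n v w = 0}
  add_mem' := by
    intro a b ha hb w hw
    rw [Bf_add_left, ha w hw, hb w hw, add_zero]
  zero_mem' := by
    intro w hw
    exact Bf_zero_left w
  smul_mem' := by
    intro c v hv w hw
    rw [Bf_smul_left, hv w hw, mul_zero]

/-- `ρ` is the reflection across `V`: the identity on `V` and minus the identity
on `V^⊥`. -/
def IsReflection (n : ℕ) (V : Submodule ℂ (Cn n)) (ρ : Cn n →ₗ[ℂ] Cn n) : Prop :=
  (∀ v ∈ V, ρ v = v) ∧ (∀ v ∈ perp n V, ρ v = -v)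

/-- The automorphism `Γ^{ℓ⁺}_{ℓ⁻}(λ)`, where `ℓ⁺, ℓ⁻` are the complementary null
lines spanned by `u` and `w`: it is multiplication by `λ` on `ℓ⁺`, by `λ⁻¹` on
`ℓ⁻` and the identity on `(ℓ⁺ ⊕ ℓ⁻)^⊥`. -/
def GammaL (n : ℕ) (u w : Cn n) (lam : ℂ) : Cn n →ₗ[ℂ] Cn n where
  toFun v := v + ((lam - 1) * (Bf n v w / Bf n u w)) • u
      + ((lam⁻¹ - 1) * (Bf n v u / Bf n u w)) • w
  map_add' a b := by
    simp only [Bf_add_left]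
    module
  map_smul' c v := by
    simp only [Bf_smul_left, RingHom.id_apply]
    module

/-- `λ ↦ λ* = 1/λ̄`. -/
def cstar (z : ℂ) : ℂ := (starRingEnd ℂ z)⁻¹

/-- The linear fractional transformation appearing in the simple factor
`p^V_{α,L}`. -/
def psi (α lam : ℂ) : ℂ := (1 + α) * (lam - α) / ((1 - α) * (lam + α))

/-- The simple factor `p^V_{α,L}(λ) = Γ^L_{ρ_V L}((1+α)(λ-α)/((1-α)(λ+α)))`,
where `ρ` is the reflection across `V` and `ℓ` spans the null line `L`. -/
def pSF (n : ℕ) (ρ : Cn n →ₗ[ℂ] Cn n) (ℓ : Cn n) (α lam : ℂ) : Cn n →ₗ[ℂ] Cn n :=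
  GammaL n ℓ (ρ ℓ) (psi α lam)

/-- The value `p^V_{α,L}(∞) = Γ^L_{ρ_V L}((1+α)/(1-α))`. -/
def pSFinf (n : ℕ) (ρ : Cn n →ₗ[ℂ] Cn n) (ℓ : Cn n) (α : ℂ) : Cn n →ₗ[ℂ] Cn n :=
  GammaL n ℓ (ρ ℓ) ((1 + α) / (1 - α))


/-!
Write `Γ(μ)` for `Γ^L_{ρL}(μ)` and `ψ` for the parameter of `p = p^V_{α,L}`. Because `ρ` is an
isometric involution exchanging `L` and `ρL`, `ρ Γ(μ) = Γ(μ⁻¹) ρ`; moreover `Γ(a) Γ(b) = Γ(ab)` and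
`ψ(λ) ψ(-λ) = ψ(0)²`. Hence `p(-λ) ρ = Γ(ψ(0)²) ρ p(λ)`, and `Γ(ψ(0)²) ρ = p(0) ρ p(0)⁻¹` is the
reflection across `V' = p(0) V`, i.e. `ρ'`. Applying the same identity to the second factor gives
`r(-λ) ρ = Γ'(ψ'(0)²) ρ' r(λ)`, which is (i).

For (ii), `p(∞) = Γ(-ψ(0))`, so `r(0)⁻¹ r(∞) = (p(0)⁻¹ Γ'(-1) p(0)) Γ(-1)`. On `V`, `Γ(-1)` is the
reflection in the non-null vector `ℓ + ρℓ`, a transvection of determinant `-1`; likewise `Γ'(-1)`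
on `V'`, and conjugating by `p(0) : V ≃ V'` does not change the determinant.
-/

variable {n : ℕ}

lemma Bf_comm (v w : Cn n) : Bf n v w = Bf n w v :=
  Finset.sum_congr rfl fun _ _ => by ring

lemma Bf_add_right (v w w' : Cn n) : Bf n v (w + w') = Bf n v w + Bf n v w' := by
  rw [Bf_comm, Bf_add_left, Bf_comm w, Bf_comm w']

lemma Bf_smul_right (c : ℂ) (v w : Cn n) : Bf n v (c • w) = c * Bf n v w := by
  rw [Bf_comm, Bf_smul_left, Bf_comm]

lemma Bf_conjSL (v w : Cn n) :
    Bf n (conjSL n v) (conjSL n w) = starRingEnd ℂ (Bf n v w) := by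
  simp only [Bf, conjSL, LinearMap.coe_mk, AddHom.coe_mk, map_sum, map_mul]
  refine Finset.sum_congr rfl fun i _ => ?_
  split_ifs <;> simp

variable (n) in
def Bform : LinearMap.BilinForm ℂ (Cn n) :=
  LinearMap.mk₂ ℂ (Bf n) Bf_add_left Bf_smul_left Bf_add_right Bf_smul_right

@[simp] lemma Bform_apply (v w : Cn n) : Bform n v w = Bf n v w := rfl

lemma perp_eq_orthogonal (V : Submodule ℂ (Cn n)) : perp n V = (Bform n).orthogonal V := by
  ext x
  simp only [LinearMap.BilinForm.mem_orthogonal_iff, Bform_apply]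
  exact forall₂_congr fun w _ => by rw [Bf_comm]

lemma sup_perp_eq_top {V : Submodule ℂ (Cn n)}
    (hV : ∀ v ∈ V, (∀ w ∈ V, Bf n v w = 0) → v = 0) : V ⊔ perp n V = ⊤ := by
  have hnd : ((Bform n).restrict V).Nondegenerate :=
    ⟨fun v hv => Subtype.ext (hV v v.2 fun w hw => hv ⟨w, hw⟩),
     fun v hv => Subtype.ext (hV v v.2 fun w hw => (Bf_comm (v : Cn n) w).trans (hv ⟨w, hw⟩))⟩
  rw [perp_eq_orthogonal]
  exact (LinearMap.BilinForm.isCompl_orthogonal_of_restrict_nondegenerate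
    (fun x y h => (Bf_comm y x).trans h) hnd).codisjoint.eq_top

lemma exists_add_of_sup_perp_eq_top {V : Submodule ℂ (Cn n)} (hV : V ⊔ perp n V = ⊤)
    (x : Cn n) : ∃ v ∈ V, ∃ w ∈ perp n V, v + w = x :=
  Submodule.mem_sup.1 (hV ▸ Submodule.mem_top)

lemma map_sup_perp_eq_top {V : Submodule ℂ (Cn n)} (hV : V ⊔ perp n V = ⊤)
    (g : Cn n ≃ₗ[ℂ] Cn n) (hg : ∀ x y, Bf n (g x) (g y) = Bf n x y) :
    V.map (g : Cn n →ₗ[ℂ] Cn n) ⊔ perp n (V.map (g : Cn n →ₗ[ℂ] Cn n)) = ⊤ := by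
  have hperp : (perp n V).map (g : Cn n →ₗ[ℂ] Cn n) ≤ perp n (V.map (g : Cn n →ₗ[ℂ] Cn n)) := by
    rintro _ ⟨w, hw, rfl⟩ _ ⟨v, hv, rfl⟩
    exact (hg w v).trans (hw v hv)
  refine eq_top_iff.2 (le_trans ?_ (sup_le_sup_left hperp _))
  rw [← Submodule.map_sup, hV, Submodule.map_top, LinearEquiv.range]

namespace IsReflection

variable {V : Submodule ℂ (Cn n)} {ρ : Cn n →ₗ[ℂ] Cn n}

lemma map (hρ : IsReflection n V ρ) (g : Cn n ≃ₗ[ℂ] Cn n)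
    (hg : ∀ x y, Bf n (g x) (g y) = Bf n x y) :
    IsReflection n (V.map (g : Cn n →ₗ[ℂ] Cn n))
      ((g : Cn n →ₗ[ℂ] Cn n) ∘ₗ ρ ∘ₗ (g.symm : Cn n →ₗ[ℂ] Cn n)) := by
  refine ⟨?_, fun x hx => ?_⟩
  · rintro _ ⟨v, hv, rfl⟩
    simp [hρ.1 v hv]
  · have hx' : g.symm x ∈ perp n V := fun v hv => by
      rw [← hg, g.apply_symm_apply]
      exact hx (g v) ⟨v, hv, rfl⟩
    simp [hρ.2 _ hx']

variable (hρ : IsReflection n V ρ) (hV : V ⊔ perp n V = ⊤)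
include hρ hV

lemma unique {σ : Cn n →ₗ[ℂ] Cn n} (hσ : IsReflection n V σ) : σ = ρ := LinearMap.ext fun x => by
  obtain ⟨v, hv, w, hw, rfl⟩ := exists_add_of_sup_perp_eq_top hV x
  rw [map_add, map_add, hσ.1 v hv, hσ.2 w hw, hρ.1 v hv, hρ.2 w hw]

lemma involutive : Function.Involutive ρ := fun x => by
  obtain ⟨v, hv, w, hw, rfl⟩ := exists_add_of_sup_perp_eq_top hV x
  rw [map_add, hρ.1 v hv, hρ.2 w hw, map_add, map_neg, hρ.1 v hv, hρ.2 w hw, neg_neg]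

lemma isometry (x y : Cn n) : Bf n (ρ x) (ρ y) = Bf n x y := by
  obtain ⟨v, hv, w, hw, rfl⟩ := exists_add_of_sup_perp_eq_top hV x
  obtain ⟨v', hv', w', hw', rfl⟩ := exists_add_of_sup_perp_eq_top hV y
  have hvw' : Bf n v w' = 0 := (Bf_comm v w').trans (hw' v hv)
  have hwv' : Bf n w v' = 0 := hw v' hv'
  simp only [map_add, hρ.1 _ hv, hρ.2 _ hw, hρ.1 _ hv', hρ.2 _ hw', ← neg_one_smul ℂ w,
    ← neg_one_smul ℂ w', Bf_add_left, Bf_add_right, Bf_smul_left, Bf_smul_right, hvw', hwv']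
  ring

lemma mem_of_apply_eq {x : Cn n} (hx : ρ x = x) : x ∈ V := by
  obtain ⟨v, hv, w, hw, rfl⟩ := exists_add_of_sup_perp_eq_top hV x
  rw [map_add, hρ.1 v hv, hρ.2 w hw, add_right_inj, neg_eq_self] at hx
  rwa [hx, add_zero]

end IsReflection

lemma GammaL_apply (u w : Cn n) (μ : ℂ) (v : Cn n) :
    GammaL n u w μ v = v + ((μ - 1) * (Bf n v w / Bf n u w)) • u
      + ((μ⁻¹ - 1) * (Bf n v u / Bf n u w)) • w := rfl

lemma GammaL_one (u w : Cn n) : GammaL n u w 1 = LinearMap.id :=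
  LinearMap.ext fun v => by simp [GammaL_apply]

section GammaL

variable {u w : Cn n}

lemma Bf_GammaL_apply_snd (hw : Bf n w w = 0) (huw : Bf n u w ≠ 0) (μ : ℂ) (v : Cn n) :
    Bf n (GammaL n u w μ v) w = μ * Bf n v w := by
  simp only [GammaL_apply, Bf_add_left, Bf_smul_left, hw]
  field_simp
  ring

lemma Bf_GammaL_apply_fst (hu : Bf n u u = 0) (huw : Bf n u w ≠ 0) (μ : ℂ) (v : Cn n) :
    Bf n (GammaL n u w μ v) u = μ⁻¹ * Bf n v u := by
  simp only [GammaL_apply, Bf_add_left, Bf_smul_left, hu, Bf_comm w u]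
  field_simp
  ring

variable (hu : Bf n u u = 0) (hw : Bf n w w = 0) (huw : Bf n u w ≠ 0)
include hu hw huw

lemma GammaL_comp (a b : ℂ) : GammaL n u w a ∘ₗ GammaL n u w b = GammaL n u w (a * b) :=
  LinearMap.ext fun v => by
    rw [LinearMap.comp_apply, GammaL_apply u w a, Bf_GammaL_apply_snd hw huw,
      Bf_GammaL_apply_fst hu huw, GammaL_apply u w b, GammaL_apply u w (a * b), mul_inv]
    module

lemma isometry_GammaL {μ : ℂ} (hμ : μ ≠ 0) (x y : Cn n) :
    Bf n (GammaL n u w μ x) (GammaL n u w μ y) = Bf n x y := by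
  simp only [GammaL_apply, Bf_add_left, Bf_add_right, Bf_smul_left, Bf_smul_right, hu, hw,
    Bf_comm u y, Bf_comm w y, Bf_comm w u]
  field_simp
  ring

def GammaLEquiv {μ : ℂ} (hμ : μ ≠ 0) : Cn n ≃ₗ[ℂ] Cn n :=
  LinearEquiv.ofLinearMap (GammaL n u w μ) (GammaL n u w μ⁻¹)
    (by rw [GammaL_comp hu hw huw, mul_inv_cancel₀ hμ, GammaL_one])
    (by rw [GammaL_comp hu hw huw, inv_mul_cancel₀ hμ, GammaL_one])

@[simp] lemma coe_GammaLEquiv {μ : ℂ} (hμ : μ ≠ 0) :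
    (GammaLEquiv hu hw huw hμ : Cn n →ₗ[ℂ] Cn n) = GammaL n u w μ := rfl

@[simp] lemma coe_GammaLEquiv_symm {μ : ℂ} (hμ : μ ≠ 0) :
    ((GammaLEquiv hu hw huw hμ).symm : Cn n →ₗ[ℂ] Cn n) = GammaL n u w μ⁻¹ := rfl

end GammaL

lemma comp_GammaL_eq_GammaL_inv_comp {ρ : Cn n →ₗ[ℂ] Cn n} (hρ : Function.Involutive ρ)
    (hρB : ∀ x y, Bf n (ρ x) (ρ y) = Bf n x y) (u : Cn n) (μ : ℂ) :
    ρ ∘ₗ GammaL n u (ρ u) μ = GammaL n u (ρ u) μ⁻¹ ∘ₗ ρ :=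
  LinearMap.ext fun x => by
    have h : Bf n (ρ x) u = Bf n x (ρ u) := by rw [← hρB x (ρ u), hρ u]
    rw [LinearMap.comp_apply, LinearMap.comp_apply, GammaL_apply, GammaL_apply, map_add, map_add,
      map_smul, map_smul, hρ u, hρB, h, inv_inv]
    module

section Scalars

variable {a : ℂ}

lemma one_add_ne_zero_of_norm_ne_one (h : ‖a‖ ≠ 1) : 1 + a ≠ 0 := fun h' =>
  h (by rw [eq_neg_of_add_eq_zero_right h', norm_neg, norm_one])

lemma one_sub_ne_zero_of_norm_ne_one (h : ‖a‖ ≠ 1) : 1 - a ≠ 0 := fun h' =>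
  h (by rw [← sub_eq_zero.1 h', norm_one])

lemma norm_cstar (a : ℂ) : ‖cstar a‖ = ‖a‖⁻¹ := by
  rw [cstar, norm_inv, Complex.norm_conj]

lemma norm_eq_one_of_norm_cstar_eq (ha : a ≠ 0) (h : ‖cstar a‖ = ‖a‖) : ‖a‖ = 1 := by
  rw [norm_cstar] at h
  have := norm_pos_iff.2 ha
  field_simp at h
  nlinarith

lemma cstar_ne_self (ha : a ≠ 0) (h : ‖a‖ ≠ 1) : cstar a ≠ a := fun h' =>
  h (norm_eq_one_of_norm_cstar_eq ha (by rw [h']))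

lemma cstar_ne_neg (ha : a ≠ 0) (h : ‖a‖ ≠ 1) : cstar a ≠ -a := fun h' =>
  h (norm_eq_one_of_norm_cstar_eq ha (by rw [h', norm_neg]))

lemma psi_ne_zero (ha : ‖a‖ ≠ 1) {lam : ℂ} (h₁ : lam ≠ a) (h₂ : lam ≠ -a) : psi a lam ≠ 0 :=
  div_ne_zero (mul_ne_zero (one_add_ne_zero_of_norm_ne_one ha) (sub_ne_zero.2 h₁))
    (mul_ne_zero (one_sub_ne_zero_of_norm_ne_one ha) (by rwa [← sub_neg_eq_add, sub_ne_zero]))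

lemma psi_zero (ha : a ≠ 0) : psi a 0 = -((1 + a) / (1 - a)) := by
  rw [psi, zero_sub, zero_add, mul_neg, neg_div, mul_div_mul_right _ _ ha]

lemma psi_neg (ha : a ≠ 0) (lam : ℂ) : psi a (-lam) = psi a 0 ^ 2 * (psi a lam)⁻¹ := by
  rw [psi_zero ha, psi, psi, inv_div]
  rcases eq_or_ne (1 + a) 0 with h₁ | h₁
  · simp [h₁]
  rcases eq_or_ne (1 - a) 0 with h₂ | h₂
  · simp [h₂]
  rcases eq_or_ne (lam - a) 0 with h₃ | h₃
  · rw [show lam = a by linear_combination h₃]; simp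
  rcases eq_or_ne (lam + a) 0 with h₄ | h₄
  · rw [show lam = -a by linear_combination h₄]; simp
  have h₃' : -lam + a ≠ 0 := fun h => h₃ (by linear_combination -h)
  have h₄' : -lam - a ≠ 0 := fun h => h₄ (by linear_combination -h)
  field_simp
  ring

end Scalars

section SimpleFactor

variable {ρ : Cn n →ₗ[ℂ] Cn n} {ℓ : Cn n} {a : ℂ}
  (hℓ : Bf n ℓ ℓ = 0) (hρℓ : Bf n (ρ ℓ) (ρ ℓ) = 0) (hℓρ : Bf n ℓ (ρ ℓ) ≠ 0)
include hℓ hρℓ hℓρ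

lemma pSF_neg_comp (hρ : Function.Involutive ρ) (hρB : ∀ x y, Bf n (ρ x) (ρ y) = Bf n x y)
    (ha : a ≠ 0) (lam : ℂ) :
    pSF n ρ ℓ a (-lam) ∘ₗ ρ = (GammaL n ℓ (ρ ℓ) (psi a 0 ^ 2) ∘ₗ ρ) ∘ₗ pSF n ρ ℓ a lam := by
  rw [pSF, pSF, LinearMap.comp_assoc, comp_GammaL_eq_GammaL_inv_comp hρ hρB,
    ← LinearMap.comp_assoc, GammaL_comp hℓ hρℓ hℓρ, psi_neg ha]

lemma pSFinf_eq_comp (ha : a ≠ 0) :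
    pSFinf n ρ ℓ a = GammaL n ℓ (ρ ℓ) (psi a 0) ∘ₗ GammaL n ℓ (ρ ℓ) (-1) := by
  rw [pSFinf, GammaL_comp hℓ hρℓ hℓρ, mul_neg_one, psi_zero ha, neg_neg]

lemma GammaL_psi_zero_inv_comp_pSFinf (ha : a ≠ 0) (hψ : psi a 0 ≠ 0) :
    GammaL n ℓ (ρ ℓ) (psi a 0)⁻¹ ∘ₗ pSFinf n ρ ℓ a = GammaL n ℓ (ρ ℓ) (-1) := by
  rw [pSFinf_eq_comp hℓ hρℓ hℓρ ha, ← LinearMap.comp_assoc, GammaL_comp hℓ hρℓ hℓρ,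
    inv_mul_cancel₀ hψ, GammaL_one, LinearMap.id_comp]

end SimpleFactor

lemma LinearMap.det_restrict_conj {R M N : Type*} [CommRing R] [AddCommGroup M] [Module R M]
    [AddCommGroup N] [Module R N] (e : M ≃ₗ[R] N) {p : Submodule R M} {f : N →ₗ[R] N}
    (hf : ∀ x ∈ p.map (e : M →ₗ[R] N), f x ∈ p.map (e : M →ₗ[R] N))
    (h : ∀ x ∈ p, ((e.symm : N →ₗ[R] M) ∘ₗ f ∘ₗ (e : M →ₗ[R] N)) x ∈ p) :
    LinearMap.det (((e.symm : N →ₗ[R] M) ∘ₗ f ∘ₗ (e : M →ₗ[R] N)).restrict h) =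
      LinearMap.det (f.restrict hf) := by
  have hconj : ((e.symm : N →ₗ[R] M) ∘ₗ f ∘ₗ (e : M →ₗ[R] N)).restrict h =
      ((e.submoduleMap p).symm : _ →ₗ[R] _) ∘ₗ f.restrict hf ∘ₗ (e.submoduleMap p : _ →ₗ[R] _) :=
    LinearMap.ext fun x => Subtype.ext (by simp)
  rw [hconj, ← LinearMap.det_conj (f.restrict hf) (e.submoduleMap p).symm, LinearEquiv.symm_symm]

namespace IsReflection

variable {V : Submodule ℂ (Cn n)} {ρ : Cn n →ₗ[ℂ] Cn n} {ℓ : Cn n}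
  (hρ : IsReflection n V ρ) (hV : V ⊔ perp n V = ⊤)
include hρ hV

lemma map_GammaL (hℓ : Bf n ℓ ℓ = 0) (hℓρ : Bf n ℓ (ρ ℓ) ≠ 0) {μ : ℂ} (hμ : μ ≠ 0) :
    IsReflection n (V.map (GammaL n ℓ (ρ ℓ) μ)) (GammaL n ℓ (ρ ℓ) (μ ^ 2) ∘ₗ ρ) := by
  have hρℓ := (hρ.isometry hV ℓ ℓ).trans hℓ
  have h := hρ.map (GammaLEquiv hℓ hρℓ hℓρ hμ) (isometry_GammaL hℓ hρℓ hℓρ hμ)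
  rwa [coe_GammaLEquiv, coe_GammaLEquiv_symm, comp_GammaL_eq_GammaL_inv_comp (hρ.involutive hV)
    (hρ.isometry hV), inv_inv, ← LinearMap.comp_assoc, GammaL_comp hℓ hρℓ hℓρ, ← sq] at h

lemma add_apply_mem (x : Cn n) : x + ρ x ∈ V :=
  hρ.mem_of_apply_eq hV (by rw [map_add, hρ.involutive hV, add_comm])

lemma GammaL_neg_one_apply_of_mem {v : Cn n} (hv : v ∈ V) :
    GammaL n ℓ (ρ ℓ) (-1) v = v + (-(Bf n v (ℓ + ρ ℓ) / Bf n ℓ (ρ ℓ))) • (ℓ + ρ ℓ) := by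
  have h : Bf n v (ρ ℓ) = Bf n v ℓ := by rw [← hρ.isometry hV v ℓ, hρ.1 v hv]
  rw [GammaL_apply, Bf_add_right, h, inv_neg_one]
  module

lemma GammaL_neg_one_mem {v : Cn n} (hv : v ∈ V) : GammaL n ℓ (ρ ℓ) (-1) v ∈ V := by
  rw [hρ.GammaL_neg_one_apply_of_mem hV hv]
  exact V.add_mem hv (V.smul_mem _ (hρ.add_apply_mem hV ℓ))

lemma det_restrict_GammaL_neg_one (hℓ : Bf n ℓ ℓ = 0) (hℓρ : Bf n ℓ (ρ ℓ) ≠ 0)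
    (h : ∀ v ∈ V, GammaL n ℓ (ρ ℓ) (-1) v ∈ V) :
    LinearMap.det ((GammaL n ℓ (ρ ℓ) (-1)).restrict h) = -1 := by
  let f : Module.Dual ℂ V :=
    (-(Bf n ℓ (ρ ℓ))⁻¹) • (Bform n (ℓ + ρ ℓ) ∘ₗ V.subtype)
  have htrans : (GammaL n ℓ (ρ ℓ) (-1)).restrict h =
      LinearMap.transvection f ⟨ℓ + ρ ℓ, hρ.add_apply_mem hV ℓ⟩ :=
    LinearMap.ext fun v => Subtype.ext (by
      rw [LinearMap.coe_restrict_apply, hρ.GammaL_neg_one_apply_of_mem hV v.2,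
        LinearMap.transvection.apply]
      simp only [f, LinearMap.smul_apply, LinearMap.comp_apply, Submodule.subtype_apply,
        Bform_apply, smul_eq_mul, Submodule.coe_add, Submodule.coe_smul, Bf_comm (ℓ + ρ ℓ)]
      module)
  have hρℓ := (hρ.isometry hV ℓ ℓ).trans hℓ
  rw [htrans, LinearMap.transvection.det]
  simp only [f, LinearMap.smul_apply, LinearMap.comp_apply, Submodule.subtype_apply,
    Bform_apply, Bf_add_left, Bf_add_right, hℓ, hρℓ, Bf_comm (ρ ℓ) ℓ, smul_eq_mul]
  field_simp
  ring

end IsReflection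

section ProductOfReflections

variable {V : Submodule ℂ (Cn n)} {ρ ρ' : Cn n →ₗ[ℂ] Cn n} {ℓ ℓ' : Cn n} (e : Cn n ≃ₗ[ℂ] Cn n)
  (hρ' : IsReflection n (V.map (e : Cn n →ₗ[ℂ] Cn n)) ρ')
  (hV' : V.map (e : Cn n →ₗ[ℂ] Cn n) ⊔ perp n (V.map (e : Cn n →ₗ[ℂ] Cn n)) = ⊤)
include hρ' hV'

lemma conj_GammaL_neg_one_mem {x : Cn n} (hx : x ∈ V) :
    ((e.symm : Cn n →ₗ[ℂ] Cn n) ∘ₗ GammaL n ℓ' (ρ' ℓ') (-1) ∘ₗ e) x ∈ V := by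
  obtain ⟨y, hy, hxy⟩ := hρ'.GammaL_neg_one_mem hV' (ℓ := ℓ') ⟨x, hx, rfl⟩
  simp only [LinearEquiv.coe_coe] at hxy
  rwa [LinearMap.comp_apply, LinearMap.comp_apply, LinearEquiv.coe_coe, LinearEquiv.coe_coe, ← hxy,
    e.symm_apply_apply]

lemma det_restrict_conj_comp_GammaL_neg_one (hρ : IsReflection n V ρ) (hV : V ⊔ perp n V = ⊤)
    (hℓ : Bf n ℓ ℓ = 0) (hℓρ : Bf n ℓ (ρ ℓ) ≠ 0) (hℓ' : Bf n ℓ' ℓ' = 0)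
    (hℓρ' : Bf n ℓ' (ρ' ℓ') ≠ 0)
    (h : ∀ x ∈ V, (((e.symm : Cn n →ₗ[ℂ] Cn n) ∘ₗ GammaL n ℓ' (ρ' ℓ') (-1) ∘ₗ e) ∘ₗ
      GammaL n ℓ (ρ ℓ) (-1)) x ∈ V) :
    LinearMap.det (((((e.symm : Cn n →ₗ[ℂ] Cn n) ∘ₗ GammaL n ℓ' (ρ' ℓ') (-1) ∘ₗ e) ∘ₗ
      GammaL n ℓ (ρ ℓ) (-1))).restrict h) = 1 := by
  rw [LinearMap.restrict_comp (fun _ => hρ.GammaL_neg_one_mem hV)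
      (fun _ => conj_GammaL_neg_one_mem e hρ' hV'), LinearMap.det_comp,
    LinearMap.det_restrict_conj e (fun _ => hρ'.GammaL_neg_one_mem hV'),
    hρ'.det_restrict_GammaL_neg_one hV' hℓ' hℓρ', hρ.det_restrict_GammaL_neg_one hV hℓ hℓρ]
  norm_num

end ProductOfReflections

theorem statement8_general (n : ℕ) (V : Submodule ℂ (Cn n))
    (hVnd : ∀ v ∈ V, (∀ w ∈ V, Bf n v w = 0) → v = 0)
    (ρ : Cn n →ₗ[ℂ] Cn n) (hρ : IsReflection n V ρ)
    (α : ℂ) (hα : α ≠ 0) (hαabs : ‖α‖ ≠ 1)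
    (ℓ : Cn n) (hℓnull : Bf n ℓ ℓ = 0)
    (hℓcompl : Bf n ℓ (ρ ℓ) ≠ 0)
    (V' : Submodule ℂ (Cn n)) (hV' : V' = Submodule.map (pSF n ρ ℓ α 0) V)
    (ρ' : Cn n →ₗ[ℂ] Cn n) (hρ' : IsReflection n V' ρ')
    (ℓ' : Cn n) (hℓ' : ℓ' = pSF n ρ ℓ α (cstar α) (conjSL n ℓ))
    (hℓ'compl : Bf n ℓ' (ρ' ℓ') ≠ 0)
    (r : ℂ → (Cn n →ₗ[ℂ] Cn n))
    (hr : ∀ lam, r lam = (pSF n ρ' ℓ' (cstar α) lam).comp (pSF n ρ ℓ α lam))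
    (A : Cn n →ₗ[ℂ] Cn n)
    (hA : A = (GammaL n ℓ (ρ ℓ) ((psi α 0)⁻¹)).comp
        ((GammaL n ℓ' (ρ' ℓ') ((psi (cstar α) 0)⁻¹)).comp
          ((pSFinf n ρ' ℓ' (cstar α)).comp (pSFinf n ρ ℓ α)))) :
    (∃ K : Cn n →ₗ[ℂ] Cn n,
      ∀ lam : ℂ, lam ≠ α → lam ≠ -α → lam ≠ cstar α → lam ≠ -cstar α →
        (r (-lam)).comp ρ = K.comp (r lam)) ∧
    (∀ x ∈ V, A x ∈ V) ∧
    ∀ h : ∀ x ∈ V, A x ∈ V, LinearMap.det (A.restrict h) = 1 := by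
  have hα' : cstar α ≠ 0 := inv_ne_zero ((map_ne_zero _).2 hα)
  have hαabs' : ‖cstar α‖ ≠ 1 := by rwa [norm_cstar, Ne, inv_eq_one]
  have hψ : psi α 0 ≠ 0 := psi_ne_zero hαabs hα.symm (neg_ne_zero.2 hα).symm
  have hψ' : psi (cstar α) 0 ≠ 0 := psi_ne_zero hαabs' hα'.symm (neg_ne_zero.2 hα').symm
  have hV := sup_perp_eq_top hVnd
  have hρℓ : Bf n (ρ ℓ) (ρ ℓ) = 0 := (hρ.isometry hV ℓ ℓ).trans hℓnull
  let e := GammaLEquiv hℓnull hρℓ hℓcompl hψ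
  subst hV' hA
  have hV'top : V.map (e : Cn n →ₗ[ℂ] Cn n) ⊔ perp n (V.map (e : Cn n →ₗ[ℂ] Cn n)) = ⊤ :=
    map_sup_perp_eq_top hV e (isometry_GammaL hℓnull hρℓ hℓcompl hψ)
  have hρ'eq : ρ' = GammaL n ℓ (ρ ℓ) (psi α 0 ^ 2) ∘ₗ ρ :=
    (hρ'.unique hV'top (hρ.map_GammaL hV hℓnull hℓcompl hψ)).symm
  have hℓ'null : Bf n ℓ' ℓ' = 0 := by
    rw [hℓ', pSF, isometry_GammaL hℓnull hρℓ hℓcompl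
      (psi_ne_zero hαabs (cstar_ne_self hα hαabs) (cstar_ne_neg hα hαabs)), Bf_conjSL, hℓnull,
      map_zero]
  have hρ'ℓ' : Bf n (ρ' ℓ') (ρ' ℓ') = 0 := (hρ'.isometry hV'top ℓ' ℓ').trans hℓ'null
  refine ⟨⟨GammaL n ℓ' (ρ' ℓ') (psi (cstar α) 0 ^ 2) ∘ₗ ρ', fun lam _ _ _ _ => ?_⟩, ?_⟩
  · rw [hr, hr, LinearMap.comp_assoc,
      pSF_neg_comp hℓnull hρℓ hℓcompl (hρ.involutive hV) (hρ.isometry hV) hα, ← hρ'eq,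
      ← LinearMap.comp_assoc, pSF_neg_comp hℓ'null hρ'ℓ' hℓ'compl (hρ'.involutive hV'top)
        (hρ'.isometry hV'top) hα', LinearMap.comp_assoc]
  · rw [← LinearMap.comp_assoc _ (pSFinf n ρ' ℓ' (cstar α)),
      GammaL_psi_zero_inv_comp_pSFinf hℓ'null hρ'ℓ' hℓ'compl hα' hψ',
      pSFinf_eq_comp hℓnull hρℓ hℓcompl hα]
    exact ⟨fun x hx => conj_GammaL_neg_one_mem e hρ' hV'top (hρ.GammaL_neg_one_mem hV hx),
      det_restrict_conj_comp_GammaL_neg_one e hρ' hV'top hρ hV hℓnull hℓcompl hℓ'null hℓ'compl⟩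

/-- In the setting of the two-step simple factor
`r(λ) := p^{V'}_{α*,L'}(λ) ∘ p^V_{α,L}(λ)`:
(i) `r(-λ) ∘ ρ_V ∘ r(λ)⁻¹` is the same for all `λ` in the domain (stated as the
existence of a single `K` with `r(-λ) ∘ ρ_V = K ∘ r(λ)` for all admissible `λ`);
(ii) `r(0)⁻¹ ∘ r(∞)` maps `V` to itself and `det ((r(0)⁻¹ ∘ r(∞))|_V) = 1`.
Here `r(0)⁻¹ = p^V_{α,L}(0)⁻¹ ∘ p^{V'}_{α*,L'}(0)⁻¹` and `p(μ)⁻¹` is realised as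
`Γ` evaluated at the inverse parameter. -/
theorem statement8 (n : ℕ) (V : Submodule ℂ (Cn n))
    (hVconj : conjSub V = V)
    (hVnd : ∀ v ∈ V, (∀ w ∈ V, Bf n v w = 0) → v = 0)
    (ρ : Cn n →ₗ[ℂ] Cn n) (hρ : IsReflection n V ρ)
    (α : ℂ) (hα : α ≠ 0) (hαabs : ‖α‖ ≠ 1)
    (ℓ : Cn n) (hℓ : ℓ ≠ 0) (hℓnull : Bf n ℓ ℓ = 0)
    (hℓcompl : Bf n ℓ (ρ ℓ) ≠ 0)
    (V' : Submodule ℂ (Cn n)) (hV' : V' = Submodule.map (pSF n ρ ℓ α 0) V)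
    (ρ' : Cn n →ₗ[ℂ] Cn n) (hρ' : IsReflection n V' ρ')
    (ℓ' : Cn n) (hℓ' : ℓ' = pSF n ρ ℓ α (cstar α) (conjSL n ℓ))
    (hℓ'compl : Bf n ℓ' (ρ' ℓ') ≠ 0)
    (r : ℂ → (Cn n →ₗ[ℂ] Cn n))
    (hr : ∀ lam, r lam = (pSF n ρ' ℓ' (cstar α) lam).comp (pSF n ρ ℓ α lam))
    (A : Cn n →ₗ[ℂ] Cn n)
    (hA : A = (GammaL n ℓ (ρ ℓ) ((psi α 0)⁻¹)).comp
        ((GammaL n ℓ' (ρ' ℓ') ((psi (cstar α) 0)⁻¹)).comp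
          ((pSFinf n ρ' ℓ' (cstar α)).comp (pSFinf n ρ ℓ α)))) :
    (∃ K : Cn n →ₗ[ℂ] Cn n,
      ∀ lam : ℂ, lam ≠ α → lam ≠ -α → lam ≠ cstar α → lam ≠ -cstar α →
        (r (-lam)).comp ρ = K.comp (r lam)) ∧
    (∀ x ∈ V, A x ∈ V) ∧
    ∀ h : ∀ x ∈ V, A x ∈ V, LinearMap.det (A.restrict h) = 1 :=
  statement8_general n V hVnd ρ hρ α hα hαabs ℓ hℓnull hℓcompl V' hV' ρ' hρ' ℓ' hℓ' hℓ'compl r hr A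
    hA
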